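/- Let λ ∈ (0,1], λ' ∈ [0,1) with λ > λ', Q = λ − λ', and let φ : M₂(ℂ) → M₂(ℂ) be φ(A) = diag(λa₁₁ + (1−λ)a₂₂, λ'a₁₁ + (1−λ')a₂₂). Define Φ(A) = (Q a₁₁/(1−λ'))e₁₁. Then Φ is q-positive, φ − Φ is completely positive, and φ(I+tφ)^{-1} − Φ(I+tΦ)^{-1} is completely positive for all t ≥ 0 (i.e., φ ≥_q Φ); since Φ has rank 1 while each φ(I+sφ)^{-1} has rank 2, φ is not q-pure. -/

import Mathlib

open Matrix Filter
open scoped Matrix.Norms.L2Operator ComplexOrder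

noncomputable section

def IsCompletelyPositive {n : Type*} [Fintype n] [DecidableEq n]
    (φ : Matrix n n ℂ →ₗ[ℂ] Matrix n n ℂ) : Prop :=
  ∀ (k : ℕ) (A : Matrix (Fin k × n) (Fin k × n) ℂ), A.PosSemidef →
    Matrix.PosSemidef (Matrix.of fun p q : Fin k × n =>
      φ (Matrix.of fun a b => A (p.1, a) (q.1, b)) p.2 q.2)

def Inv2 {n : Type*} [Fintype n] [DecidableEq n]
    (f g : Matrix n n ℂ →ₗ[ℂ] Matrix n n ℂ) : Prop :=
  f ∘ₗ g = LinearMap.id ∧ g ∘ₗ f = LinearMap.id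

def QPositive {n : Type*} [Fintype n] [DecidableEq n]
    (φ : Matrix n n ℂ →ₗ[ℂ] Matrix n n ℂ) : Prop :=
  (∀ c : ℝ, c < 0 → ¬ Module.End.HasEigenvalue φ (c : ℂ)) ∧
  ∀ t : ℝ, 0 ≤ t → ∃ ψ, Inv2 (LinearMap.id + (t : ℂ) • φ) ψ ∧
    IsCompletelyPositive (φ ∘ₗ ψ)

def toC {n : Type*} [Fintype n] [DecidableEq n]
    (φ : Matrix n n ℂ →ₗ[ℂ] Matrix n n ℂ) : Matrix n n ℂ →L[ℂ] Matrix n n ℂ :=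
  LinearMap.toContinuousLinearMap φ

def conjMap {n : Type*} [Fintype n] [DecidableEq n]
    (φ : Matrix n n ℂ →ₗ[ℂ] Matrix n n ℂ) (U : Matrix n n ℂ) :
    Matrix n n ℂ →ₗ[ℂ] Matrix n n ℂ where
  toFun A := Uᴴ * φ (U * A * Uᴴ) * U
  map_add' A B := by simp [Matrix.mul_add, Matrix.add_mul]
  map_smul' c A := by simp [Matrix.mul_smul, Matrix.smul_mul]

/-- Schur (Hadamard) multiplication by a fixed matrix, as a linear map. -/
def schurMap {n : Type*} [Fintype n] [DecidableEq n] (M : Matrix n n ℂ) :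
    Matrix n n ℂ →ₗ[ℂ] Matrix n n ℂ where
  toFun A := Matrix.of fun i j => M i j * A i j
  map_add' A B := by ext i j; simp [Matrix.add_apply]; ring
  map_smul' c A := by ext i j; simp [Matrix.smul_apply]; ring

/-- A state on `Mₙ(ℂ)`. -/
def IsState {n : Type*} [Fintype n] [DecidableEq n]
    (ρ : Matrix n n ℂ →ₗ[ℂ] ℂ) : Prop :=
  ρ 1 = 1 ∧ ∀ A, A.PosSemidef → ∃ r : ℝ, 0 ≤ r ∧ ρ A = (r : ℂ)

def IsProjection {n : Type*} [Fintype n] [DecidableEq n] (P : Matrix n n ℂ) : Prop :=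
  P.IsHermitian ∧ P * P = P

/-- φ ≥_q ψ. -/
def QSub {n : Type*} [Fintype n] [DecidableEq n]
    (φ ψ : Matrix n n ℂ →ₗ[ℂ] Matrix n n ℂ) : Prop :=
  ∀ t : ℝ, 0 ≤ t → ∀ χ₁ χ₂, Inv2 (LinearMap.id + (t : ℂ) • φ) χ₁ →
    Inv2 (LinearMap.id + (t : ℂ) • ψ) χ₂ →
    IsCompletelyPositive (φ ∘ₗ χ₁ - ψ ∘ₗ χ₂)

def QPure {n : Type*} [Fintype n] [DecidableEq n]
    (φ : Matrix n n ℂ →ₗ[ℂ] Matrix n n ℂ) : Prop :=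
  QPositive φ ∧ ∀ ψ, QPositive ψ → QSub φ ψ →
    (ψ = 0 ∨ ∃ s : ℝ, 0 ≤ s ∧ ∀ χ, Inv2 (LinearMap.id + (s : ℂ) • φ) χ → ψ = φ ∘ₗ χ)

/-- The block map `[[A,B],[C,D]] ↦ [[φ(A), σ(B)],[σ*(C), Ψ(D)]]`. -/
def cornerMap {n k : Type*} [Fintype n] [Fintype k] [DecidableEq n] [DecidableEq k]
    (φ : Matrix n n ℂ →ₗ[ℂ] Matrix n n ℂ) (Ψ : Matrix k k ℂ →ₗ[ℂ] Matrix k k ℂ)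
    (σ : Matrix n k ℂ →ₗ[ℂ] Matrix n k ℂ) :
    Matrix (n ⊕ k) (n ⊕ k) ℂ →ₗ[ℂ] Matrix (n ⊕ k) (n ⊕ k) ℂ where
  toFun M := Matrix.fromBlocks (φ M.toBlocks₁₁) (σ M.toBlocks₁₂)
      ((σ (M.toBlocks₂₁)ᴴ)ᴴ) (Ψ M.toBlocks₂₂)
  map_add' M N := by
    have h11 : (M + N).toBlocks₁₁ = M.toBlocks₁₁ + N.toBlocks₁₁ := rfl
    have h12 : (M + N).toBlocks₁₂ = M.toBlocks₁₂ + N.toBlocks₁₂ := rfl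
    have h21 : (M + N).toBlocks₂₁ = M.toBlocks₂₁ + N.toBlocks₂₁ := rfl
    have h22 : (M + N).toBlocks₂₂ = M.toBlocks₂₂ + N.toBlocks₂₂ := rfl
    simp only [h11, h12, h21, h22, map_add, conjTranspose_add, Matrix.fromBlocks_add]
  map_smul' c M := by
    have h11 : (c • M).toBlocks₁₁ = c • M.toBlocks₁₁ := rfl
    have h12 : (c • M).toBlocks₁₂ = c • M.toBlocks₁₂ := rfl
    have h21 : (c • M).toBlocks₂₁ = c • M.toBlocks₂₁ := rfl
    have h22 : (c • M).toBlocks₂₂ = c • M.toBlocks₂₂ := rfl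
    simp only [h11, h12, h21, h22, RingHom.id_apply, _root_.map_smul,
      conjTranspose_smul, star_star, Matrix.fromBlocks_smul]

/-- The diagonal-part map on `M₂(ℂ)`. -/
def diagMap : Matrix (Fin 2) (Fin 2) ℂ →ₗ[ℂ] Matrix (Fin 2) (Fin 2) ℂ where
  toFun A := Matrix.diagonal fun i => A i i
  map_add' A B := by ext i j; by_cases h : i = j <;> simp [Matrix.diagonal, h]
  map_smul' c A := by ext i j; by_cases h : i = j <;> simp [Matrix.diagonal, h]

/-- The map `A ↦ diag(λa₁₁ + (1-λ)a₂₂, λ'a₁₁ + (1-λ')a₂₂)`. -/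
def phiD (l l' : ℝ) : Matrix (Fin 2) (Fin 2) ℂ →ₗ[ℂ] Matrix (Fin 2) (Fin 2) ℂ where
  toFun A := Matrix.diagonal
    ![(l : ℂ) * A 0 0 + (1 - (l : ℂ)) * A 1 1,
      (l' : ℂ) * A 0 0 + (1 - (l' : ℂ)) * A 1 1]
  map_add' A B := by
    ext i j
    fin_cases i <;> fin_cases j <;>
      simp [Matrix.diagonal, Matrix.add_apply] <;> ring
  map_smul' c A := by
    ext i j
    fin_cases i <;> fin_cases j <;>
      simp [Matrix.diagonal, Matrix.smul_apply] <;> ring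

/-- The rank one q-subordinate `Φ(A) = (Q a₁₁/(1-λ')) e₁₁`. -/
def phiSub (l l' : ℝ) : Matrix (Fin 2) (Fin 2) ℂ →ₗ[ℂ] Matrix (Fin 2) (Fin 2) ℂ where
  toFun A := ((((l : ℂ) - (l' : ℂ)) / (1 - (l' : ℂ))) * A 0 0) •
    Matrix.single (0 : Fin 2) (0 : Fin 2) (1 : ℂ)
  map_add' A B := by
    simp [Matrix.add_apply, mul_add, add_smul]
  map_smul' c A := by
    simp [Matrix.smul_apply, smul_smul]; ring_nf

/-!
Every map involved is a `diagMix M e : A ↦ diag(M · diag A) + e · offdiag A` with `M` a real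
matrix and `e` a real scalar. These maps compose like the pairs `(M, e)`, so the resolvent
`φ(I + tφ)⁻¹` of `φ = diagMix M 0` is `diagMix (M (1 + tM)⁻¹) 0`; such a map is completely
positive as soon as its matrix is entrywise nonnegative, and its rank is the rank of the matrix.
Everything thus becomes `2 × 2` arithmetic, the only nontrivial entry of the q-difference being
`(λ + tQ)/((1 + t)(1 + tQ)) - Q/(1 - λ' + tQ) = λ'(1 - λ)/((1 + t)(1 + tQ)(1 - λ' + tQ)) ≥ 0`.
-/

lemma Inv2.unique {n : Type*} [Fintype n] [DecidableEq n]
    {f g g' : Matrix n n ℂ →ₗ[ℂ] Matrix n n ℂ} (h : Inv2 f g) (h' : Inv2 f g') : g = g' :=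
  calc g = g ∘ₗ (f ∘ₗ g') := by rw [h'.1, LinearMap.comp_id]
    _ = g' := by rw [← LinearMap.comp_assoc, h.2, LinearMap.id_comp]

lemma not_hasEigenvalue_neg_of_inv2 {n : Type*} [Fintype n] [DecidableEq n]
    {φ : Matrix n n ℂ →ₗ[ℂ] Matrix n n ℂ}
    (hφ : ∀ t : ℝ, 0 ≤ t → ∃ χ, Inv2 (LinearMap.id + (t : ℂ) • φ) χ)
    {c : ℝ} (hc : c < 0) : ¬ Module.End.HasEigenvalue φ (c : ℂ) := by
  intro hE
  obtain ⟨v, hv⟩ := hE.exists_hasEigenvector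
  obtain ⟨χ, hχ⟩ := hφ (-c⁻¹) (by simpa using hc.le)
  have hker : (LinearMap.id + ((-c⁻¹ : ℝ) : ℂ) • φ :
      Matrix n n ℂ →ₗ[ℂ] Matrix n n ℂ) v = 0 := by
    have hc' : (c : ℂ) ≠ 0 := by exact_mod_cast hc.ne
    simp only [LinearMap.add_apply, LinearMap.id_apply, LinearMap.smul_apply, hv.apply_eq_smul,
      smul_smul]
    push_cast
    rw [neg_mul, inv_mul_cancel₀ hc', neg_smul, one_smul, add_neg_cancel]
  have hχv := LinearMap.congr_fun hχ.2 v
  rw [LinearMap.comp_apply, hker, map_zero] at hχv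
  exact hv.2 hχv.symm

lemma QPositive.of_resolvent {n : Type*} [Fintype n] [DecidableEq n]
    {φ : Matrix n n ℂ →ₗ[ℂ] Matrix n n ℂ}
    (hφ : ∀ t : ℝ, 0 ≤ t → ∃ χ, Inv2 (LinearMap.id + (t : ℂ) • φ) χ ∧
      IsCompletelyPositive (φ ∘ₗ χ)) : QPositive φ :=
  ⟨fun _ hc => not_hasEigenvalue_neg_of_inv2 (fun t ht => (hφ t ht).imp fun _ => And.left) hc,
    hφ⟩

lemma not_qPure_of_qSub {n : Type*} [Fintype n] [DecidableEq n]
    {φ ψ : Matrix n n ℂ →ₗ[ℂ] Matrix n n ℂ} (hψ : QPositive ψ) (hφψ : QSub φ ψ)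
    (hψ0 : Module.finrank ℂ (LinearMap.range ψ) ≠ 0)
    (hres : ∀ s : ℝ, 0 ≤ s → ∃ χ, Inv2 (LinearMap.id + (s : ℂ) • φ) χ ∧
      Module.finrank ℂ (LinearMap.range (φ ∘ₗ χ)) ≠ Module.finrank ℂ (LinearMap.range ψ)) :
    ¬ QPure φ := by
  rintro ⟨-, hpure⟩
  rcases hpure ψ hψ hφψ with rfl | ⟨s, hs, hray⟩
  · exact hψ0 (by rw [LinearMap.range_zero, finrank_bot])
  · obtain ⟨χ, hχ, hne⟩ := hres s hs
    exact hne (by rw [hray χ hχ])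

namespace Matrix

variable {n : Type*} [Fintype n] [DecidableEq n]

def diagMix (M : Matrix n n ℝ) (e : ℝ) : Matrix n n ℂ →ₗ[ℂ] Matrix n n ℂ where
  toFun A := of fun i j => if i = j then ∑ k, (M i k : ℂ) * A k k else (e : ℂ) * A i j
  map_add' A B := by
    ext i j
    simp only [of_apply, add_apply]
    split_ifs <;> simp [mul_add, Finset.sum_add_distrib]
  map_smul' c A := by
    ext i j
    simp only [of_apply, smul_apply]
    split_ifs <;> simp [Finset.mul_sum, mul_left_comm]

lemma diagMix_apply (M : Matrix n n ℝ) (e : ℝ) (A : Matrix n n ℂ) (i j : n) :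
    diagMix M e A i j = if i = j then ∑ k, (M i k : ℂ) * A k k else (e : ℂ) * A i j := rfl

lemma diagMix_comp (M N : Matrix n n ℝ) (e f : ℝ) :
    diagMix M e ∘ₗ diagMix N f = diagMix (M * N) (e * f) := by
  ext A i j
  by_cases h : i = j
  · simp [diagMix_apply, h, mul_apply, Finset.mul_sum, Finset.sum_mul, mul_assoc]
    exact Finset.sum_comm
  · simp [diagMix_apply, h, mul_assoc]

lemma diagMix_one_one : diagMix (1 : Matrix n n ℝ) 1 = LinearMap.id := by
  ext A i j
  by_cases h : i = j <;> simp [diagMix_apply, h, one_apply, apply_ite Complex.ofReal]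

lemma diagMix_sub (M N : Matrix n n ℝ) (e f : ℝ) :
    diagMix M e - diagMix N f = diagMix (M - N) (e - f) := by
  ext A i j
  by_cases h : i = j <;> simp [diagMix_apply, h, sub_mul]

lemma id_add_smul_diagMix (t : ℝ) (M : Matrix n n ℝ) (e : ℝ) :
    LinearMap.id + (t : ℂ) • diagMix M e = diagMix (1 + t • M) (1 + t * e) := by
  ext A i j
  by_cases h : i = j <;>
    simp [diagMix_apply, h, one_apply, apply_ite Complex.ofReal, add_mul, Finset.sum_add_distrib,
      Finset.mul_sum, mul_assoc]

lemma inv2_diagMix {M N : Matrix n n ℝ} {e f : ℝ} (h : M * N = 1) (he : e * f = 1) :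
    Inv2 (diagMix M e) (diagMix N f) :=
  ⟨by rw [diagMix_comp, h, he, diagMix_one_one],
   by rw [diagMix_comp, mul_eq_one_comm.mp h, mul_comm, he, diagMix_one_one]⟩

lemma inv2_id_add_smul_diagMix {t : ℝ} {M N : Matrix n n ℝ} (hN : (1 + t • M) * N = 1) :
    Inv2 (LinearMap.id + (t : ℂ) • diagMix M 0) (diagMix N 1) := by
  rw [id_add_smul_diagMix, mul_zero, add_zero]
  exact inv2_diagMix hN (one_mul 1)

lemma diagMix_comp_eq_of_inv2 {t : ℝ} {M N : Matrix n n ℝ} (hN : (1 + t • M) * N = 1)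
    {χ : Matrix n n ℂ →ₗ[ℂ] Matrix n n ℂ}
    (hχ : Inv2 (LinearMap.id + (t : ℂ) • diagMix M 0) χ) :
    diagMix M 0 ∘ₗ χ = diagMix (M * N) 0 := by
  rw [hχ.unique (inv2_id_add_smul_diagMix hN), diagMix_comp, zero_mul]

lemma isCompletelyPositive_diagMix {M : Matrix n n ℝ} (hM : ∀ i j, 0 ≤ M i j) :
    IsCompletelyPositive (diagMix M 0) := by
  intro k A hA
  -- the block matrix is `∑ i j, M i j • P i * S j * P i`, where `S j` repeats the `(j, j)` blocks
  -- of `A` and `P i` projects onto the rows with second index `i`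
  let P : n → Matrix (Fin k × n) (Fin k × n) ℂ := fun i =>
    diagonal fun r => if r.2 = i then 1 else 0
  let S : n → Matrix (Fin k × n) (Fin k × n) ℂ := fun j =>
    A.submatrix (fun r => (r.1, j)) (fun r => (r.1, j))
  have hsum : (of fun p q : Fin k × n =>
      diagMix M 0 (of fun a b => A (p.1, a) (q.1, b)) p.2 q.2) =
      ∑ i, ∑ j, M i j • (P i * S j * (P i)ᴴ) := by
    ext r c
    by_cases h : r.2 = c.2 <;> simp [P, S, diagMix_apply, h, sum_apply, Complex.real_smul]
  rw [hsum]
  refine posSemidef_sum _ fun i _ => posSemidef_sum _ fun j _ => ?_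
  exact ((hA.submatrix _).mul_mul_conjTranspose_same (P i)).smul (hM i j)

lemma diagMix_zero_eq_comp (M : Matrix n n ℝ) :
    diagMix M 0 = diagonalLinearMap n ℂ ℂ ∘ₗ (M.map (↑)).mulVecLin ∘ₗ diagLinearMap n ℂ ℂ := by
  ext A i j
  by_cases h : i = j <;>
    simp [diagMix_apply, h, diagonalLinearMap, diagLinearMap, mulVec, dotProduct]

lemma finrank_range_diagMix_zero (M : Matrix n n ℝ) :
    Module.finrank ℂ (LinearMap.range (diagMix M 0)) = (M.map (↑) : Matrix n n ℂ).rank := by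
  have hdiag : Function.Surjective (diagLinearMap n ℂ ℂ) := fun d =>
    ⟨diagonal d, diag_diagonal d⟩
  have hdiagonal : Function.Injective (diagonalLinearMap n ℂ ℂ) := diagonal_injective
  rw [diagMix_zero_eq_comp, LinearMap.range_comp, LinearMap.range_comp,
    LinearMap.range_eq_top.mpr hdiag, Submodule.map_top, rank]
  exact (Submodule.equivMapOfInjective _ hdiagonal _).finrank_eq.symm

lemma finrank_range_diagMix_zero_of_isUnit {M : Matrix n n ℝ} (hM : IsUnit M) :
    Module.finrank ℂ (LinearMap.range (diagMix M 0)) = Fintype.card n := by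
  rw [finrank_range_diagMix_zero, rank_of_isUnit]
  exact hM.map (Complex.ofRealHom.mapMatrix (m := n))

lemma one_add_smul_diagonal_mul_diagonal_inv {t : ℝ} {d : n → ℝ}
    (hd : ∀ i, 1 + t * d i ≠ 0) :
    (1 + t • diagonal d) * diagonal (fun i => (1 + t * d i)⁻¹) = 1 := by
  rw [← diagonal_smul, ← diagonal_one, diagonal_add, diagonal_mul_diagonal]
  congr 1
  funext i
  exact mul_inv_cancel₀ (hd i)

end Matrix

def phiMatrix (l l' : ℝ) : Matrix (Fin 2) (Fin 2) ℝ := !![l, 1 - l; l', 1 - l']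

def phiSubDiag (l l' : ℝ) : Fin 2 → ℝ := ![(l - l') / (1 - l'), 0]

-- `(1 + t • phiMatrix l l')⁻¹`, by the adjugate formula
def phiResolvent (l l' t : ℝ) : Matrix (Fin 2) (Fin 2) ℝ :=
  ((1 + t) * (1 + t * (l - l')))⁻¹ • !![1 + t * (1 - l'), -(t * (1 - l)); -(t * l'), 1 + t * l]

lemma phiD_eq_diagMix (l l' : ℝ) : phiD l l' = diagMix (phiMatrix l l') 0 := by
  ext A i j
  fin_cases i <;> fin_cases j <;> simp [phiD, phiMatrix, diagMix_apply, Fin.sum_univ_two]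

lemma phiSub_eq_diagMix (l l' : ℝ) : phiSub l l' = diagMix (diagonal (phiSubDiag l l')) 0 := by
  ext A i j
  fin_cases i <;> fin_cases j <;> simp [phiSub, phiSubDiag, diagMix_apply, Fin.sum_univ_two]

section PhiD

variable {l l' t : ℝ}

lemma isUnit_phiMatrix (hll : l' ≠ l) : IsUnit (phiMatrix l l') := by
  rw [isUnit_iff_isUnit_det, phiMatrix, det_fin_two_of, isUnit_iff_ne_zero]
  intro h
  exact hll (by linarith)

lemma one_add_smul_phiMatrix_mul_phiResolvent (hll : l' < l) (ht : 0 ≤ t) :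
    (1 + t • phiMatrix l l') * phiResolvent l l' t = 1 := by
  have hdet : (1 + t) * (1 + t * (l - l')) ≠ 0 := (mul_pos (by linarith) (by nlinarith)).ne'
  have hadj : (1 + t • phiMatrix l l') *
      !![1 + t * (1 - l'), -(t * (1 - l)); -(t * l'), 1 + t * l] =
      ((1 + t) * (1 + t * (l - l'))) • 1 := by
    ext i j
    fin_cases i <;> fin_cases j <;> simp [phiMatrix, mul_apply, Fin.sum_univ_two] <;> ring
  rw [phiResolvent, mul_smul_comm, hadj, smul_smul, inv_mul_cancel₀ hdet, one_smul]

lemma phiMatrix_mul_phiResolvent (l l' t : ℝ) :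
    phiMatrix l l' * phiResolvent l l' t = ((1 + t) * (1 + t * (l - l')))⁻¹ •
      !![l + t * (l - l'), 1 - l; l', 1 - l' + t * (l - l')] := by
  rw [phiResolvent, mul_smul_comm]
  congr 1
  ext i j
  fin_cases i <;> fin_cases j <;> simp [phiMatrix, mul_apply, Fin.sum_univ_two] <;> ring

lemma phiSubDiag_nonneg (hll : l' < l) (hl'1 : l' < 1) (i : Fin 2) : 0 ≤ phiSubDiag l l' i := by
  fin_cases i
  · exact div_nonneg (by linarith) (by linarith)
  · exact le_rfl

lemma one_add_smul_phiSubMatrix_mul_inv (hll : l' < l) (hl'1 : l' < 1) (ht : 0 ≤ t) :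
    (1 + t • diagonal (phiSubDiag l l')) * diagonal (fun i => (1 + t * phiSubDiag l l' i)⁻¹) =
      1 :=
  one_add_smul_diagonal_mul_diagonal_inv fun i =>
    (add_pos_of_pos_of_nonneg one_pos (mul_nonneg ht (phiSubDiag_nonneg hll hl'1 i))).ne'

lemma qPositive_phiSub (hll : l' < l) (hl'1 : l' < 1) : QPositive (phiSub l l') := by
  rw [phiSub_eq_diagMix]
  refine QPositive.of_resolvent fun t ht =>
    ⟨_, inv2_id_add_smul_diagMix (one_add_smul_phiSubMatrix_mul_inv hll hl'1 ht), ?_⟩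
  rw [diagMix_comp, zero_mul, diagonal_mul_diagonal]
  refine isCompletelyPositive_diagMix fun i j => ?_
  by_cases h : i = j
  · subst h
    have hi := phiSubDiag_nonneg hll hl'1 i
    rw [diagonal_apply_eq]
    exact mul_nonneg hi (inv_nonneg.2 (add_nonneg zero_le_one (mul_nonneg ht hi)))
  · simp [h]

lemma isCompletelyPositive_phiD_sub_phiSub (hl1 : l ≤ 1) (hl'0 : 0 ≤ l') (hl'1 : l' < 1) :
    IsCompletelyPositive (phiD l l' - phiSub l l') := by
  rw [phiD_eq_diagMix, phiSub_eq_diagMix, diagMix_sub, sub_zero]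
  refine isCompletelyPositive_diagMix fun i j => ?_
  fin_cases i <;> fin_cases j <;> simp [phiMatrix, phiSubDiag]
  · rw [div_le_iff₀ (by linarith)]
    nlinarith
  · linarith
  · exact hl'0
  · linarith

lemma phiResolvent_sub_nonneg (hl1 : l ≤ 1) (hl'0 : 0 ≤ l') (hl'1 : l' < 1) (hll : l' < l)
    (ht : 0 ≤ t) (i j : Fin 2) :
    0 ≤ (phiMatrix l l' * phiResolvent l l' t - diagonal (phiSubDiag l l') *
      diagonal (fun i => (1 + t * phiSubDiag l l' i)⁻¹)) i j := by
  have hQt : 0 < 1 + t * (l - l') := by nlinarith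
  have hdet : 0 ≤ (1 + t * (l - l'))⁻¹ * (1 + t)⁻¹ := by positivity
  fin_cases i <;> fin_cases j <;> simp [phiMatrix_mul_phiResolvent, phiSubDiag]
  · have hK : (l - l') / (1 - l') * (1 + t * ((l - l') / (1 - l')))⁻¹ =
        (l - l') / (1 - l' + t * (l - l')) := by
      have h1l' : 1 - l' ≠ 0 := by linarith
      field_simp
    rw [hK, ← mul_inv, inv_mul_eq_div, div_le_div_iff₀ (by nlinarith) (by positivity)]
    -- the difference of the two sides is `λ'(1 - λ)`
    nlinarith [mul_nonneg hl'0 (sub_nonneg.2 hl1)]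
  · exact mul_nonneg hdet (by linarith)
  · exact mul_nonneg hdet hl'0
  · exact mul_nonneg hdet (by nlinarith)

lemma qSub_phiD_phiSub (hl1 : l ≤ 1) (hl'0 : 0 ≤ l') (hl'1 : l' < 1) (hll : l' < l) :
    QSub (phiD l l') (phiSub l l') := by
  intro t ht χ₁ χ₂ h₁ h₂
  rw [phiD_eq_diagMix, phiSub_eq_diagMix] at *
  rw [diagMix_comp_eq_of_inv2 (one_add_smul_phiMatrix_mul_phiResolvent hll ht) h₁,
    diagMix_comp_eq_of_inv2 (one_add_smul_phiSubMatrix_mul_inv hll hl'1 ht) h₂,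
    diagMix_sub, sub_zero]
  exact isCompletelyPositive_diagMix (phiResolvent_sub_nonneg hl1 hl'0 hl'1 hll ht)

lemma finrank_range_phiSub (hll : l' < l) (hl'1 : l' < 1) :
    Module.finrank ℂ (LinearMap.range (phiSub l l')) = 1 := by
  have hK : (l - l') / (1 - l') ≠ 0 := (div_pos (by linarith) (by linarith)).ne'
  rw [phiSub_eq_diagMix, finrank_range_diagMix_zero, diagonal_map (by simp), rank_diagonal,
    Fintype.card_subtype]
  simp [phiSubDiag, Finset.filter, Fin.univ_succ, hK]

lemma inv2_id_add_smul_phiD (hll : l' < l) (ht : 0 ≤ t) :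
    Inv2 (LinearMap.id + (t : ℂ) • phiD l l') (diagMix (phiResolvent l l' t) 1) := by
  rw [phiD_eq_diagMix]
  exact inv2_id_add_smul_diagMix (one_add_smul_phiMatrix_mul_phiResolvent hll ht)

lemma finrank_range_phiD_comp_of_inv2 (hll : l' < l) (ht : 0 ≤ t)
    {χ : Matrix (Fin 2) (Fin 2) ℂ →ₗ[ℂ] Matrix (Fin 2) (Fin 2) ℂ}
    (hχ : Inv2 (LinearMap.id + (t : ℂ) • phiD l l') χ) :
    Module.finrank ℂ (LinearMap.range (phiD l l' ∘ₗ χ)) = 2 := by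
  have hN := one_add_smul_phiMatrix_mul_phiResolvent hll ht
  rw [phiD_eq_diagMix] at hχ ⊢
  rw [diagMix_comp_eq_of_inv2 hN hχ]
  exact finrank_range_diagMix_zero_of_isUnit ((isUnit_phiMatrix hll.ne).mul
    ((isUnit_iff_isUnit_det _).mpr (isUnit_det_of_left_inverse hN)))

end PhiD

/-- `phiD l l'` q-dominates the rank one map `phiSub l l'`, hence
is not q-pure. -/
theorem stmt_14 (l l' : ℝ) (hl : l ∈ Set.Ioc (0 : ℝ) 1)
    (hl' : l' ∈ Set.Ico (0 : ℝ) 1) (hll : l' < l) :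
    QPositive (phiSub l l') ∧
    IsCompletelyPositive (phiD l l' - phiSub l l') ∧
    QSub (phiD l l') (phiSub l l') ∧
    Module.finrank ℂ (LinearMap.range (phiSub l l')) = 1 ∧
    (∀ s : ℝ, 0 ≤ s → ∀ χ, Inv2 (LinearMap.id + (s : ℂ) • phiD l l') χ →
      Module.finrank ℂ (LinearMap.range (phiD l l' ∘ₗ χ)) = 2) ∧
    ¬ QPure (phiD l l') := by
  obtain ⟨-, hl1⟩ := hl
  obtain ⟨hl'0, hl'1⟩ := hl'
  have hpos := qPositive_phiSub hll hl'1
  have hsub := qSub_phiD_phiSub hl1 hl'0 hl'1 hll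
  have hrank₁ := finrank_range_phiSub hll hl'1
  have hrank₂ (s : ℝ) (hs : 0 ≤ s) χ (hχ : Inv2 (LinearMap.id + (s : ℂ) • phiD l l') χ) :=
    finrank_range_phiD_comp_of_inv2 hll hs hχ
  refine ⟨hpos, isCompletelyPositive_phiD_sub_phiSub hl1 hl'0 hl'1, hsub, hrank₁, hrank₂,
    not_qPure_of_qSub hpos hsub (by rw [hrank₁]; exact one_ne_zero) fun s hs =>
      ⟨_, inv2_id_add_smul_phiD hll hs, by
        rw [hrank₂ s hs _ (inv2_id_add_smul_phiD hll hs), hrank₁]; decide⟩⟩
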